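/- Pairwise error bound within a type class: if x⃗ is generated i.i.d. from P_i, the probability of all sequences in the type class T(P_{x⃗}) satisfying D(P_{x⃗}‖P_j) < D(P_{x⃗}‖P_i) is at most 2^{-n·max{D(P_{x⃗}‖P_i), D(P_{x⃗}‖P_j)}}. -/

import Mathlib

open Finset
open scoped Classical

/-- Empirical type of a sequence. -/
noncomputable def typeOf {α : Type*} [Fintype α] [DecidableEq α] {n : ℕ} (xv : Fin n → α) :
    α → ℝ :=
  fun a => ((Finset.univ.filter fun i => xv i = a).card : ℝ) / n

/-- Base-2 KL divergence. -/
noncomputable def KL {α : Type*} [Fintype α] (P Q : α → ℝ) : ℝ :=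
  ∑ x, P x * Real.logb 2 (P x / Q x)

/-!
For a sequence `xv` of type `T`, factoring the i.i.d. probability letter by letter gives
`Pᵢⁿ(xv) = 2^{-n D(T‖Pᵢ)} · Tⁿ(xv)`. Summing over the type class and bounding the sum of
`Tⁿ` over it by the total mass `(∑ₐ T a)ⁿ = 1` shows that the type class has probability at most
`2^{-n D(T‖Pᵢ)}`; under `D(T‖Pⱼ) < D(T‖Pᵢ)` this exponent is the maximum, and otherwise the
event is empty.
-/

section TypeClass

variable {α : Type*} [Fintype α] [DecidableEq α] {n : ℕ}

lemma typeOf_nonneg (xv : Fin n → α) (a : α) : 0 ≤ typeOf xv a := by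
  unfold typeOf
  positivity

lemma sum_typeOf (hn : 0 < n) (xv : Fin n → α) : ∑ a, typeOf xv a = 1 := by
  have hcount : ∑ a, (#{i | xv i = a} : ℝ) = n := by
    rw [← Nat.cast_sum, ← card_eq_sum_card_fiberwise fun i _ => mem_univ (xv i), card_univ,
      Fintype.card_fin]
  simp only [typeOf, ← sum_div, hcount]
  exact div_self (by positivity)

lemma prod_comp_eq_prod_pow_card_fiber {ι M : Type*} [Fintype ι] [CommMonoid M] (g : ι → α)
    (f : α → M) : ∏ k, f (g k) = ∏ a, f a ^ #{i | g i = a} := by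
  rw [← prod_fiberwise' univ g f]
  exact prod_congr rfl fun a _ => prod_const _

lemma two_rpow_mul_logb_div_mul_pow {p t : ℝ} (hp : 0 < p) (ht : 0 < t) (c : ℕ) :
    (2 : ℝ) ^ (c * Real.logb 2 (p / t)) * t ^ c = p ^ c := by
  rw [mul_comm (c : ℝ), Real.rpow_mul zero_le_two,
    Real.rpow_logb two_pos (by norm_num) (div_pos hp ht), Real.rpow_natCast,
    ← mul_pow, div_mul_cancel₀ _ ht.ne']

lemma prod_eq_two_rpow_neg_KL_mul_prod_typeOf (hn : 0 < n) (xv : Fin n → α) {P : α → ℝ}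
    (hP : ∀ a, 0 < P a) :
    ∏ k, P (xv k) = 2 ^ (-(n : ℝ) * KL (typeOf xv) P) * ∏ k, typeOf xv (xv k) := by
  have hexp : -(n : ℝ) * KL (typeOf xv) P
      = ∑ a, (#{i | xv i = a} : ℝ) * Real.logb 2 (P a / typeOf xv a) := by
    simp only [KL, mul_sum]
    refine sum_congr rfl fun a _ => ?_
    rw [← inv_div, Real.logb_inv, typeOf]
    field_simp
  rw [hexp, Real.rpow_sum_of_pos two_pos, prod_comp_eq_prod_pow_card_fiber xv P,
    prod_comp_eq_prod_pow_card_fiber xv (typeOf xv), ← prod_mul_distrib]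
  refine prod_congr rfl fun a _ => ?_
  rcases Nat.eq_zero_or_pos #{i | xv i = a} with hzero | hpos
  · -- an absent letter contributes `1` on both sides, whatever the junk `logb 2 (P a / 0)` is
    simp [hzero]
  · have hT : 0 < typeOf xv a := div_pos (by exact_mod_cast hpos) (by exact_mod_cast hn)
    exact (two_rpow_mul_logb_div_mul_pow (hP a) hT _).symm

lemma sum_typeClass_prod_le (hn : 0 < n) {P : α → ℝ} (hP : ∀ a, 0 < P a) {T : α → ℝ}
    (hT : ∃ xv : Fin n → α, typeOf xv = T) :
    (∑ xv : Fin n → α, if typeOf xv = T then ∏ k, P (xv k) else 0) ≤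
      2 ^ (-(n : ℝ) * KL T P) := by
  obtain ⟨xv₀, rfl⟩ := hT
  calc (∑ xv : Fin n → α, if typeOf xv = typeOf xv₀ then ∏ k, P (xv k) else 0)
      ≤ ∑ xv : Fin n → α, 2 ^ (-(n : ℝ) * KL (typeOf xv₀) P) * ∏ k, typeOf xv₀ (xv k) := by
        refine sum_le_sum fun xv _ => ?_
        split_ifs with htype
        · rw [← htype, prod_eq_two_rpow_neg_KL_mul_prod_typeOf hn xv hP]
        · exact mul_nonneg (by positivity) (prod_nonneg fun k _ => typeOf_nonneg xv₀ _)
    _ = 2 ^ (-(n : ℝ) * KL (typeOf xv₀) P) * (∑ a, typeOf xv₀ a) ^ n := by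
        rw [← mul_sum, Fintype.sum_pow]
    _ = 2 ^ (-(n : ℝ) * KL (typeOf xv₀) P) := by
        rw [sum_typeOf hn, one_pow, mul_one]

end TypeClass

theorem stmt15_general {α : Type*} [Fintype α] [DecidableEq α] {n : ℕ} (hn : 0 < n)
    (Pi Pj : α → ℝ)
    (hPi0 : ∀ x, 0 < Pi x)
    (T : α → ℝ) (hT : ∃ xv : Fin n → α, typeOf xv = T) :
    (∑ xv : Fin n → α, if typeOf xv = T ∧ KL T Pj < KL T Pi then
        ∏ k, Pi (xv k) else 0) ≤
      (2:ℝ) ^ (-(n:ℝ) * max (KL T Pi) (KL T Pj)) := by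
  by_cases hlt : KL T Pj < KL T Pi
  · simp only [hlt, and_true, max_eq_left hlt.le]
    exact sum_typeClass_prod_le hn hPi0 hT
  · simp only [hlt, and_false, if_false, sum_const_zero]
    positivity

theorem stmt15 {α : Type*} [Fintype α] [DecidableEq α] {n : ℕ} (hn : 0 < n)
    (Pi Pj : α → ℝ)
    (hPi0 : ∀ x, 0 < Pi x) (hPi1 : ∑ x, Pi x = 1)
    (hPj0 : ∀ x, 0 < Pj x) (hPj1 : ∑ x, Pj x = 1)
    (T : α → ℝ) (hT : ∃ xv : Fin n → α, typeOf xv = T) :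
    (∑ xv : Fin n → α, if typeOf xv = T ∧ KL T Pj < KL T Pi then
        ∏ k, Pi (xv k) else 0) ≤
      (2:ℝ) ^ (-(n:ℝ) * max (KL T Pi) (KL T Pj)) :=
  stmt15_general hn Pi Pj hPi0 T hT
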